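/- There exists an absolute constant K > 0 such that the following holds. Let α > 0, let C ∈ ℂ^{M×M} be Hermitian positive semidefinite with min_i [C]_{i,i} ≥ α, and let Ĉ ∈ ℂ^{M×M} be Hermitian with ‖Ĉ − C‖_∞ ≤ α/2. Then for all i, j ∈ {1,…,M}, |[Ĉ]_{i,j}/√([Ĉ]_{i,i}[Ĉ]_{j,j}) − [C]_{i,j}/√([C]_{i,i}[C]_{j,j})| ≤ K·‖C‖_∞·α^{−2}·‖Ĉ − C‖_∞. -/

import Mathlib

open MeasureTheory ProbabilityTheory Matrix
open scoped ComplexOrder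

noncomputable section

/-- Entrywise maximum-modulus norm of a complex matrix. -/
def maxNorm {M : ℕ} (A : Matrix (Fin M) (Fin M) ℂ) : ℝ :=
  ⨆ i, ⨆ j, ‖A i j‖

/-- Frobenius norm of a complex matrix. -/
def frobNorm {M : ℕ} (A : Matrix (Fin M) (Fin M) ℂ) : ℝ :=
  Real.sqrt (∑ i, ∑ j, ‖A i j‖ ^ 2)

/-- Spectral (operator) norm of a complex matrix. -/
def specNorm {M : ℕ} (A : Matrix (Fin M) (Fin M) ℂ) : ℝ :=
  ‖Matrix.toEuclideanCLM (𝕜 := ℂ) (n := Fin M) A‖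

/-- diag(C)^{-1/2}: the diagonal matrix with entries [C]_{ii}^{-1/2}. -/
def dInvSqrt {M : ℕ} (C : Matrix (Fin M) (Fin M) ℂ) : Matrix (Fin M) (Fin M) ℂ :=
  Matrix.diagonal fun i => ((Real.sqrt (C i i).re)⁻¹ : ℂ)

/-- Bussgang gain A = sqrt(2/π)·diag(C)^{-1/2}. -/
def busA {M : ℕ} (C : Matrix (Fin M) (Fin M) ℂ) : Matrix (Fin M) (Fin M) ℂ :=
  (Real.sqrt (2 / Real.pi) : ℂ) • dInvSqrt C

/-- The arcsine-law map P_arcsine(C) = (2/π)[arcsin(D^{-1/2} Re(C) D^{-1/2}) + i·arcsin(D^{-1/2} Im(C) D^{-1/2})]. -/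
def arcsineMap {M : ℕ} (C : Matrix (Fin M) (Fin M) ℂ) : Matrix (Fin M) (Fin M) ℂ :=
  Matrix.of fun i j =>
    ((2 / Real.pi : ℝ) : ℂ) *
      ((Real.arcsin ((C i j).re / (Real.sqrt (C i i).re * Real.sqrt (C j j).re)) : ℝ) +
        Complex.I *
          ((Real.arcsin ((C i j).im / (Real.sqrt (C i i).re * Real.sqrt (C j j).re)) : ℝ) : ℂ))

/-- one-bit sign quantizer: sign(x) = 1 if x ≥ 0, else -1. -/
def rsign (x : ℝ) : ℝ := if 0 ≤ x then 1 else -1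

/-- one-bit complex quantization with dithers: sign(Re(y)+τ^R) + i·sign(Im(y)+τ^I). -/
def quant {M : ℕ} (yv : Fin M → ℂ) (tR tI : Fin M → ℝ) : Fin M → ℂ :=
  fun i => (rsign ((yv i).re + tR i) : ℂ) + Complex.I * (rsign ((yv i).im + tI i) : ℂ)

/-- dithered covariance estimator Ĉ = ½ C̃ + ½ C̃ᴴ with C̃ = (λ²/N) Σ r_n r̃_nᴴ. -/
def ditherEst {M N : ℕ} (lam : ℝ) (r rt : Fin N → Fin M → ℂ) : Matrix (Fin M) (Fin M) ℂ :=
  ((1 : ℂ)/2) • (Matrix.of (fun i j => ((lam ^ 2 / N : ℝ) : ℂ) * ∑ n, r n i * (starRingEnd ℂ) (rt n j))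
    + (Matrix.of (fun i j => ((lam ^ 2 / N : ℝ) : ℂ) * ∑ n, r n i * (starRingEnd ℂ) (rt n j)))ᴴ)

/-- the uniform probability measure on [-λ, λ]. -/
def unifIcc (lam : ℝ) : Measure ℝ :=
  (ENNReal.ofReal (2 * lam))⁻¹ • (volume.restrict (Set.Icc (-lam) lam))

/-- S-subgaussian coordinates: (E|Re(y)_j|^p)^{1/p}, (E|Im(y)_j|^p)^{1/p} ≤ S √p ‖C_y‖_∞^{1/2} for p ≥ 2. -/
def SubgaussianCoords {Ω : Type} [MeasureSpace Ω] {M : ℕ} (S : ℝ)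
    (y : Ω → Fin M → ℂ) (Cy : Matrix (Fin M) (Fin M) ℂ) : Prop :=
  ∀ (p : ℝ), 2 ≤ p → ∀ j : Fin M,
    (∫ ω, |(y ω j).re| ^ p) ^ (1/p) ≤ S * Real.sqrt p * Real.sqrt (maxNorm Cy) ∧
    (∫ ω, |(y ω j).im| ^ p) ^ (1/p) ≤ S * Real.sqrt p * Real.sqrt (maxNorm Cy)

/-!
Write `d = √(C i i * C j j)` and `d' = √(Ĉ i i * Ĉ j j)`. Then
`Ĉ i j / d' - C i j / d = (Ĉ i j - C i j) / d' + (C i j / d) * (d - d') / d'`,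
and `‖C i j‖ ≤ d` because the `2 × 2` principal minors of a positive semidefinite matrix are
nonnegative. The diagonal of `Ĉ` stays above `α / 2`, so `d' ≥ α / 2`, while
`|d - d'| ≤ |d² - d'²| / d ≤ 3 ‖C‖∞ ε / α` with `ε = ‖Ĉ - C‖∞`; altogether `K = 8` works.
-/

theorem norm_apply_le_maxNorm {M : ℕ} (A : Matrix (Fin M) (Fin M) ℂ) (i j : Fin M) :
    ‖A i j‖ ≤ maxNorm A :=
  (le_ciSup (f := fun j => ‖A i j‖) (Set.finite_range _).bddAbove j).trans
    (le_ciSup (f := fun i => ⨆ j, ‖A i j‖) (Set.finite_range _).bddAbove i)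

namespace Matrix.PosSemidef

theorem norm_apply_sq_le {n 𝕜 : Type*} [Fintype n] [RCLike 𝕜] {A : Matrix n n 𝕜}
    (hA : A.PosSemidef) (i j : n) :
    ‖A i j‖ ^ 2 ≤ RCLike.re (A i i) * RCLike.re (A j j) := by
  have hminor := (hA.submatrix ![i, j]).det_nonneg
  rw [det_fin_two] at hminor
  simp only [submatrix_apply, Matrix.cons_val_zero, Matrix.cons_val_one] at hminor
  rw [← hA.1.apply j i, ← hA.1.coe_re_apply_self i, ← hA.1.coe_re_apply_self j,
    RCLike.star_def, RCLike.mul_conj] at hminor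
  exact_mod_cast sub_nonneg.mp hminor

end Matrix.PosSemidef

theorem abs_sqrt_sub_sqrt_le {x y : ℝ} (hx : 0 < x) (hy : 0 ≤ y) :
    |√x - √y| ≤ |x - y| / √x := by
  have hsx : 0 < √x := Real.sqrt_pos.mpr hx
  rw [le_div_iff₀ hsx]
  calc |√x - √y| * √x ≤ |√x - √y| * (√x + √y) := by
        gcongr
        exact le_add_of_nonneg_right (Real.sqrt_nonneg y)
    _ = |x - y| := by
      rw [← abs_of_nonneg (by positivity : 0 ≤ √x + √y), ← abs_mul,
        show (√x - √y) * (√x + √y) = √x ^ 2 - √y ^ 2 by ring, Real.sq_sqrt hx.le,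
        Real.sq_sqrt hy]

theorem norm_div_sub_div_le {𝕜 : Type*} [RCLike 𝕜] {z z' : 𝕜} {d d' : ℝ} (hd : 0 < d)
    (hd' : 0 < d') (hz : ‖z‖ ≤ d) :
    ‖z' / d' - z / d‖ ≤ (‖z' - z‖ + |d - d'|) / d' := by
  have hsplit : z' / d' - z / d = (z' - z) / d' + z / d * ((d - d' : ℝ) / d') := by
    have : (d : 𝕜) ≠ 0 := by exact_mod_cast hd.ne'
    have : (d' : 𝕜) ≠ 0 := by exact_mod_cast hd'.ne'
    push_cast
    field_simp
    ring
  have hzd : ‖z / d‖ ≤ 1 := by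
    rw [norm_div, RCLike.norm_ofReal, abs_of_pos hd]
    exact div_le_one_of_le₀ hz hd.le
  calc ‖z' / d' - z / d‖ ≤ ‖z' - z‖ / d' + ‖z / d‖ * (|d - d'| / d') := by
        rw [hsplit]
        refine (norm_add_le _ _).trans_eq ?_
        rw [norm_mul, norm_div (z' - z), norm_div ((d - d' : ℝ) : 𝕜), RCLike.norm_ofReal,
          RCLike.norm_ofReal, abs_of_pos hd']
    _ ≤ ‖z' - z‖ / d' + 1 * (|d - d'| / d') := by gcongr
    _ = (‖z' - z‖ + |d - d'|) / d' := by ring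

theorem norm_div_sqrt_mul_sub_div_sqrt_mul_le {z z' : ℂ} {a b a' b' α m ε : ℝ} (hα : 0 < α)
    (ha : α ≤ a) (hb : α ≤ b) (ham : a ≤ m) (hbm : b ≤ m) (ha' : |a' - a| ≤ ε)
    (hb' : |b' - b| ≤ ε) (hε : ε ≤ α / 2) (hz : ‖z‖ ^ 2 ≤ a * b)
    (hz' : ‖z' - z‖ ≤ ε) :
    ‖z' / (√(a' * b') : ℂ) - z / (√(a * b) : ℂ)‖ ≤ 8 * m * (α ^ 2)⁻¹ * ε := by
  obtain ⟨ha'l, ha'u⟩ := abs_le.mp ha'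
  obtain ⟨hb'l, hb'u⟩ := abs_le.mp hb'
  have hε0 : 0 ≤ ε := (abs_nonneg _).trans ha'
  have hαm : α ≤ m := ha.trans ham
  have hmε : 0 ≤ 3 * m * ε := by nlinarith
  have hd : α ≤ √(a * b) := Real.le_sqrt_of_sq_le (by nlinarith)
  have hd' : α / 2 ≤ √(a' * b') := Real.le_sqrt_of_sq_le (by nlinarith)
  have hprod : |a * b - a' * b'| ≤ 3 * m * ε := by
    rw [show a * b - a' * b' = (a - a') * b' + a * (b - b') by ring]
    refine (abs_add_le _ _).trans ?_
    rw [abs_mul, abs_mul, abs_sub_comm a, abs_sub_comm b, abs_of_pos (by linarith : 0 < b'),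
      abs_of_pos (by linarith : 0 < a)]
    nlinarith [mul_le_mul_of_nonneg_left hb'u hε0]
  have hroot : |√(a * b) - √(a' * b')| ≤ 3 * m * ε / α :=
    calc |√(a * b) - √(a' * b')| ≤ |a * b - a' * b'| / √(a * b) :=
          abs_sqrt_sub_sqrt_le (by nlinarith) (by nlinarith)
      _ ≤ 3 * m * ε / α := div_le_div₀ hmε hprod hα hd
  have hzd : ‖z‖ ≤ √(a * b) := Real.le_sqrt_of_sq_le hz
  calc ‖z' / (√(a' * b') : ℂ) - z / (√(a * b) : ℂ)‖
        ≤ (‖z' - z‖ + |√(a * b) - √(a' * b')|) / √(a' * b') :=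
          norm_div_sub_div_le (by linarith) (by linarith) hzd
    _ ≤ (ε + 3 * m * ε / α) / (α / 2) :=
          div_le_div₀ (by positivity) (add_le_add hz' hroot) (by positivity) hd'
    _ ≤ 8 * m * (α ^ 2)⁻¹ * ε := by
          rw [div_le_iff₀ (by positivity)]
          field_simp
          nlinarith [mul_le_mul_of_nonneg_right hαm hε0]

/-- stability of the normalized correlation entries. -/
theorem stmt9 :
    ∃ K : ℝ, 0 < K ∧
      ∀ (M : ℕ) (α : ℝ), 0 < α →
      ∀ (C Chat : Matrix (Fin M) (Fin M) ℂ), C.PosSemidef → Chat.IsHermitian →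
      (∀ i, α ≤ (C i i).re) → maxNorm (Chat - C) ≤ α / 2 →
      ∀ i j, ‖Chat i j / ((Real.sqrt ((Chat i i).re * (Chat j j).re) : ℝ) : ℂ)
          - C i j / ((Real.sqrt ((C i i).re * (C j j).re) : ℝ) : ℂ)‖
        ≤ K * maxNorm C * (α ^ 2)⁻¹ * maxNorm (Chat - C) := by
  refine ⟨8, by norm_num, ?_⟩
  intro M α hα C Chat hC _ hdiag hclose i j
  have hentry (k l : Fin M) : ‖Chat k l - C k l‖ ≤ maxNorm (Chat - C) :=
    norm_apply_le_maxNorm (Chat - C) k l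
  have hdiag_close (k : Fin M) : |(Chat k k).re - (C k k).re| ≤ maxNorm (Chat - C) := by
    rw [← Complex.sub_re]
    exact (Complex.abs_re_le_norm _).trans (hentry k k)
  have hdiag_le (k : Fin M) : (C k k).re ≤ maxNorm C :=
    (Complex.re_le_norm _).trans (norm_apply_le_maxNorm C k k)
  exact norm_div_sqrt_mul_sub_div_sqrt_mul_le hα (hdiag i) (hdiag j) (hdiag_le i) (hdiag_le j)
    (hdiag_close i) (hdiag_close j) hclose (hC.norm_apply_sq_le i j) (hentry i j)

end
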